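/- Let β, r, θ, c > 0 with β > r, let û₁ be the smallest zero of f(u) = β c u³ - β u + 2r in (0,1), and let (u₋, 1-u₋) be a positive fixed point of V₂ with 0 < u₋ < û₁ (so θ = Ψ₂(u₋) and f(u₋) > 0). Set q(u₋) = 1 - u₋ + u₋(1-u₋)(β - 2θ u₋/(1 + c u₋²)²), and let λ₁, λ₂ be the complex eigenvalues of the Jacobian matrix of V₂ at (u₋, 1-u₋). Then: if q(u₋) < 1 both eigenvalues satisfy |λᵢ| < 1 (attractive); if q(u₋) > 1 both satisfy |λᵢ| > 1 (repelling); and if q(u₋) = 1 then λ₁, λ₂ are a complex-conjugate pair with |λ₁| = |λ₂| = 1 (nonhyperbolic). -/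

import Mathlib

/-- `Ψ₂(u) = (βu - r)(1 + cu²)/u²`. -/
noncomputable def Psi2 (β r c u : ℝ) : ℝ := (β * u - r) * (1 + c * u ^ 2) / u ^ 2

/-- The cubic `f(u) = βcu³ - βu + 2r`. -/
noncomputable def fcub (β r c u : ℝ) : ℝ := β * c * u ^ 3 - β * u + 2 * r

/-- The Jacobian matrix of `V₂(u,v) = (u(2-u) - uv, βuv + (1-r)v - θu²v/(1+cu²))`
at the point `(u,v)`. -/
noncomputable def J2 (β r θ c : ℝ) (u v : ℝ) : Matrix (Fin 2) (Fin 2) ℝ :=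
  !![2 - 2 * u - v, -u;
     β * v - 2 * θ * u * v / (1 + c * u ^ 2) ^ 2,
     β * u + 1 - r - θ * u ^ 2 / (1 + c * u ^ 2)]

/-!
The fixed-point relation `θ u₋² / (1 + c u₋²) = β u₋ - r` turns the trace of the Jacobian at
`E₋` into `2 - u₋` and its determinant into `q`, while `q - (1 - u₋) = (1 - u₋) f(u₋) / (1 + c u₋²)`,
so `f(u₋) > 0` says that the characteristic polynomial is positive at `1`. For `q < 1` the Jury
conditions `|trace| < 1 + det < 2` follow; for `q ≥ 1` the discriminant `(2 - u₋)² - 4q` is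
negative, so the eigenvalues are a conjugate pair of modulus `√q`.
-/

open Polynomial Complex ComplexConjugate

lemma aeval_charpoly_fin_two {R A : Type*} [CommRing R] [Nontrivial R] [CommRing A] [Algebra R A]
    (M : Matrix (Fin 2) (Fin 2) R) (z : A) :
    aeval z M.charpoly = z ^ 2 - algebraMap R A M.trace * z + algebraMap R A M.det := by
  simp [Matrix.charpoly_fin_two]

section RealQuadratic

variable {T D : ℝ} {z : ℂ}

lemma re_im_of_quadratic_eq_zero (h : z ^ 2 - T * z + D = 0) :
    z.re ^ 2 - z.im ^ 2 - T * z.re + D = 0 ∧ z.im * (2 * z.re - T) = 0 := by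
  have hre := congrArg re h
  have him := congrArg im h
  simp only [sub_re, add_re, sub_im, add_im, mul_re, mul_im, sq, ofReal_re, ofReal_im,
    zero_re, zero_im] at hre him
  constructor <;> linarith

/-- The sufficient direction of the Schur–Cohn–Jury criterion for a real monic quadratic. -/
theorem norm_lt_one_of_quadratic_eq_zero (hD : D < 1) (hT : |T| < 1 + D)
    (h : z ^ 2 - T * z + D = 0) : ‖z‖ < 1 := by
  obtain ⟨hre, him⟩ := re_im_of_quadratic_eq_zero h
  obtain ⟨hT₁, hT₂⟩ := abs_lt.mp hT
  rcases mul_eq_zero.mp him with hy | hx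
  · -- a real root: the quadratic is positive at `±1` and has its vertex `T / 2` in `(-1, 1)`
    rw [← abs_re_eq_norm.mpr hy, abs_lt]
    rw [hy] at hre
    constructor <;> nlinarith
  · have hnorm : ‖z‖ ^ 2 = D := by
      rw [Complex.sq_norm, normSq_apply]
      nlinarith
    nlinarith [norm_nonneg z]

theorem exists_conj_roots_of_sq_lt (hTD : T ^ 2 < 4 * D) :
    ∃ μ : ℂ, μ.im ≠ 0 ∧ ‖μ‖ ^ 2 = D ∧
      ∀ z : ℂ, z ^ 2 - T * z + D = 0 ↔ z = μ ∨ z = conj μ := by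
  set s := √(D - T ^ 2 / 4)
  have hs : s ^ 2 = D - T ^ 2 / 4 := Real.sq_sqrt (by linarith)
  have hs₀ : s ≠ 0 := (Real.sqrt_pos.mpr (by linarith)).ne'
  refine ⟨⟨T / 2, s⟩, hs₀, ?_, fun z => ?_⟩
  · rw [Complex.sq_norm, normSq_mk]
    linarith
  · have hfactor : z ^ 2 - T * z + D = (z - ⟨T / 2, s⟩) * (z - conj ⟨T / 2, s⟩) := by
      apply Complex.ext <;> simp [sq] <;> nlinarith
    rw [hfactor, mul_eq_zero, sub_eq_zero, sub_eq_zero]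

theorem sq_norm_eq_of_quadratic_eq_zero (hTD : T ^ 2 < 4 * D) (h : z ^ 2 - T * z + D = 0) :
    ‖z‖ ^ 2 = D := by
  obtain ⟨μ, -, hμ, hroots⟩ := exists_conj_roots_of_sq_lt hTD
  rcases (hroots z).mp h with rfl | rfl
  · exact hμ
  · rwa [RCLike.norm_conj]

end RealQuadratic

section FixedPoint

variable {β r θ c u : ℝ}

lemma Psi2_mul_sq_div (hu : u ≠ 0) (hcu : 1 + c * u ^ 2 ≠ 0) :
    Psi2 β r c u * u ^ 2 / (1 + c * u ^ 2) = β * u - r := by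
  rw [Psi2, div_mul_cancel₀ _ (pow_ne_zero 2 hu), mul_div_assoc, div_self hcu, mul_one]

lemma trace_J2 (hθ : θ * u ^ 2 / (1 + c * u ^ 2) = β * u - r) :
    (J2 β r θ c u (1 - u)).trace = 2 - u := by
  rw [J2, Matrix.trace_fin_two_of, hθ]
  ring

lemma det_J2 (hθ : θ * u ^ 2 / (1 + c * u ^ 2) = β * u - r) :
    (J2 β r θ c u (1 - u)).det =
      1 - u + u * (1 - u) * (β - 2 * θ * u / (1 + c * u ^ 2) ^ 2) := by
  rw [J2, Matrix.det_fin_two_of, hθ]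
  ring

lemma sub_two_mul_Psi2_div_eq_fcub_div (hu : u ≠ 0) (hcu : 1 + c * u ^ 2 ≠ 0) :
    β - 2 * Psi2 β r c u * u / (1 + c * u ^ 2) ^ 2 = fcub β r c u / (u * (1 + c * u ^ 2)) := by
  have hPsi2 : 2 * Psi2 β r c u * u / (1 + c * u ^ 2) ^ 2 =
      2 * (β * u - r) / (u * (1 + c * u ^ 2)) := by
    rw [Psi2, div_eq_div_iff (pow_ne_zero 2 hcu) (mul_ne_zero hu hcu)]
    field_simp
  rw [hPsi2, fcub, sub_div' (mul_ne_zero hu hcu)]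
  ring

lemma one_sub_lt_of_fcub_pos (hc : 0 ≤ c) (hu₀ : 0 < u) (hu₁ : u < 1) (hf : 0 < fcub β r c u) :
    1 - u < 1 - u + u * (1 - u) * (β - 2 * Psi2 β r c u * u / (1 + c * u ^ 2) ^ 2) := by
  have hcu : 0 < 1 + c * u ^ 2 := by positivity
  rw [sub_two_mul_Psi2_div_eq_fcub_div hu₀.ne' hcu.ne', lt_add_iff_pos_right]
  have : 0 < 1 - u := sub_pos.mpr hu₁
  positivity

end FixedPoint

theorem stability_Eminus_V2_general (β r θ c u1 um : ℝ)
    (hc : 0 < c)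
    (hu1 : u1 ∈ Set.Ioo (0 : ℝ) 1)
    (hum0 : 0 < um) (hum1 : um < u1)
    (hfix : θ = Psi2 β r c um) (hfpos : 0 < fcub β r c um)
    (q : ℝ) (hq : q = 1 - um + um * (1 - um) * (β - 2 * θ * um / (1 + c * um ^ 2) ^ 2)) :
    (q < 1 → ∀ l : ℂ,
        Polynomial.aeval l (J2 β r θ c um (1 - um)).charpoly = 0 → ‖l‖ < 1) ∧
    (1 < q → ∀ l : ℂ,
        Polynomial.aeval l (J2 β r θ c um (1 - um)).charpoly = 0 → 1 < ‖l‖) ∧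
    (q = 1 → ∃ μ : ℂ, μ.im ≠ 0 ∧ ‖μ‖ = 1 ∧
        ∀ l : ℂ, Polynomial.aeval l (J2 β r θ c um (1 - um)).charpoly = 0 ↔
          (l = μ ∨ l = (starRingEnd ℂ) μ)) := by
  subst hfix
  have hum1' : um < 1 := hum1.trans hu1.2
  have hcu : 0 < 1 + c * um ^ 2 := by positivity
  have hθ := Psi2_mul_sq_div (β := β) (r := r) hum0.ne' hcu.ne'
  have hq₁ : 1 - um < q := hq ▸ one_sub_lt_of_fcub_pos hc.le hum0 hum1' hfpos
  have hroot (l : ℂ) : aeval l (J2 β r (Psi2 β r c um) c um (1 - um)).charpoly =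
      l ^ 2 - ((2 - um : ℝ) : ℂ) * l + (q : ℂ) := by
    rw [aeval_charpoly_fin_two, trace_J2 hθ, det_J2 hθ, ← hq, coe_algebraMap]
  refine ⟨fun hq' l hl => ?_, fun hq' l hl => ?_, fun hq' => ?_⟩
  · refine norm_lt_one_of_quadratic_eq_zero hq' ?_ (hroot l ▸ hl)
    rw [abs_of_pos (by linarith)]
    linarith
  · have hnorm := sq_norm_eq_of_quadratic_eq_zero (by nlinarith) (hroot l ▸ hl)
    nlinarith [norm_nonneg l]
  · obtain ⟨μ, hμ, hnorm, hroots⟩ := exists_conj_roots_of_sq_lt (T := 2 - um) (D := q)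
      (by nlinarith)
    refine ⟨μ, hμ, ?_, fun l => hroot l ▸ hroots l⟩
    rw [hq'] at hnorm
    exact (pow_eq_one_iff_of_nonneg (norm_nonneg μ) two_ne_zero).mp hnorm

/-- Stability classification of the positive fixed point `E₋ = (u₋, 1-u₋)` of `V₂`
(with `u₋` below the smallest zero `û₁` of `f` in `(0,1)`): with
`q(u₋) = 1 - u₋ + u₋(1-u₋)(β - 2θu₋/(1+cu₋²)²)`, if `q(u₋) < 1` the eigenvalues of
the Jacobian at `E₋` have modulus `< 1` (attractive), if `q(u₋) > 1` they have
modulus `> 1` (repelling), and if `q(u₋) = 1` they form a complex-conjugate pair of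
modulus `1` (nonhyperbolic). -/
theorem stability_Eminus_V2 (β r θ c u1 um : ℝ)
    (hβ : 0 < β) (hr : 0 < r) (hθ : 0 < θ) (hc : 0 < c) (hβr : r < β)
    (hu1 : u1 ∈ Set.Ioo (0 : ℝ) 1) (hz1 : fcub β r c u1 = 0)
    (hsmall : ∀ u ∈ Set.Ioo (0 : ℝ) 1, fcub β r c u = 0 → u1 ≤ u)
    (hum0 : 0 < um) (hum1 : um < u1)
    (hfix : θ = Psi2 β r c um) (hfpos : 0 < fcub β r c um)
    (q : ℝ) (hq : q = 1 - um + um * (1 - um) * (β - 2 * θ * um / (1 + c * um ^ 2) ^ 2)) :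
    (q < 1 → ∀ l : ℂ,
        Polynomial.aeval l (J2 β r θ c um (1 - um)).charpoly = 0 → ‖l‖ < 1) ∧
    (1 < q → ∀ l : ℂ,
        Polynomial.aeval l (J2 β r θ c um (1 - um)).charpoly = 0 → 1 < ‖l‖) ∧
    (q = 1 → ∃ μ : ℂ, μ.im ≠ 0 ∧ ‖μ‖ = 1 ∧
        ∀ l : ℂ, Polynomial.aeval l (J2 β r θ c um (1 - um)).charpoly = 0 ↔
          (l = μ ∨ l = (starRingEnd ℂ) μ)) :=
  stability_Eminus_V2_general β r θ c u1 um hc hu1 hum0 hum1 hfix hfpos q hq
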